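/- arXiv:1801.08380 — 2 statements merged into one kernel-verified Lean document; each statement's English description precedes it below -/
import Mathlib

section
/- Let G be an oriented connected degree-3 graph and V a discrete gradient vector field on K(G) with m₂ critical simplices of dimension 2. Set F = { f ∈ E : D_f contains a critical 2-simplex of V }. Then the subgraph A(G,V) = (V, E ∖ F) of G is acyclic and has at least |E| − m₂ edges. -/
namespace MorseApprox

variable {α : Type*}

/-- A (finite abstract) simplicial complex: a collection of nonempty finite simplices
closed under taking nonempty subsets. -/
def IsComplex (K : Set (Finset α)) : Prop :=
  (∀ σ ∈ K, σ.Nonempty) ∧ ∀ σ ∈ K, ∀ τ : Finset α, τ ⊆ σ → τ.Nonempty → τ ∈ K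

def IsSubcomplex (L K : Set (Finset α)) : Prop :=
  L ⊆ K ∧ IsComplex L

def IsMaximalFace (K : Set (Finset α)) (τ : Finset α) : Prop :=
  τ ∈ K ∧ ∀ ρ ∈ K, τ ⊆ ρ → ρ = τ

/-- A free face: a non-maximal simplex contained in a unique maximal simplex. -/
def IsFreeFace (K : Set (Finset α)) (σ : Finset α) : Prop :=
  σ ∈ K ∧ ¬ IsMaximalFace K σ ∧ ∃! τ : Finset α, IsMaximalFace K τ ∧ σ ⊆ τ

/-- An elementary collapse removes a free face `σ` together with its unique maximal
coface `τ`, provided `dim τ = dim σ + 1`. -/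
def ElemCollapse (K K' : Set (Finset α)) : Prop :=
  ∃ σ τ : Finset α, IsFreeFace K σ ∧ IsMaximalFace K τ ∧ σ ⊆ τ ∧
    τ.card = σ.card + 1 ∧ K' = K \ {σ, τ}

/-- `K` collapses to `L` via a finite sequence of elementary collapses. -/
def Collapses (K L : Set (Finset α)) : Prop :=
  Relation.ReflTransGen ElemCollapse K L

/-- `K` is collapsible if it collapses to a single vertex. -/
def Collapsible (K : Set (Finset α)) : Prop :=
  ∃ p : α, Collapses K ({({p} : Finset α)} : Set (Finset α))

/-- `K` is connected: its 1-skeleton is connected as a graph. -/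
def ComplexConnected [DecidableEq α] (K : Set (Finset α)) : Prop :=
  ∀ x y : α, ({x} : Finset α) ∈ K → ({y} : Finset α) ∈ K →
    Relation.ReflTransGen (fun a b : α => ({a, b} : Finset α) ∈ K ∧ a ≠ b) x y

/-- `σ` is a facet of `τ`. -/
def IsFacet (σ τ : Finset α) : Prop :=
  σ ⊆ τ ∧ τ.card = σ.card + 1

/-- The step relation of the Hasse diagram of `K` modified by the matching `V`:
an edge `τ → σ'` for every facet `σ'` of `τ` with `(σ', τ) ∉ V`, and an
edge `σ → τ` for every `(σ, τ) ∈ V`. -/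
def VStep (K : Set (Finset α)) (V : Set (Finset α × Finset α)) :
    Finset α → Finset α → Prop := fun x y =>
  (x ∈ K ∧ y ∈ K ∧ IsFacet y x ∧ (y, x) ∉ V) ∨ (x, y) ∈ V

/-- A discrete gradient vector field (Morse matching) on `K`. -/
def IsDGVF (K : Set (Finset α)) (V : Set (Finset α × Finset α)) : Prop :=
  (∀ p ∈ V, p.1 ∈ K ∧ p.2 ∈ K ∧ IsFacet p.1 p.2) ∧
  (∀ p ∈ V, ∀ q ∈ V,
    (p.1 = q.1 ∨ p.1 = q.2 ∨ p.2 = q.1 ∨ p.2 = q.2) → p = q) ∧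
  (∀ σ : Finset α, ¬ Relation.TransGen (VStep K V) σ σ)

/-- A critical simplex of a gradient vector field. -/
def IsCritical (K : Set (Finset α)) (V : Set (Finset α × Finset α))
    (σ : Finset α) : Prop :=
  σ ∈ K ∧ ∀ p ∈ V, σ ≠ p.1 ∧ σ ≠ p.2

noncomputable def criticalCount (K : Set (Finset α))
    (V : Set (Finset α × Finset α)) : ℕ :=
  {σ : Finset α | IsCritical K V σ}.ncard

noncomputable def regularCount (V : Set (Finset α × Finset α)) : ℕ :=
  {σ : Finset α | ∃ p ∈ V, σ = p.1 ∨ σ = p.2}.ncard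

def twoSimplices (K : Set (Finset α)) : Set (Finset α) :=
  {σ | σ ∈ K ∧ σ.card = 3}

/-- `L` is an erasable subcomplex of `K`. -/
def ErasableSubcomplex (K L : Set (Finset α)) : Prop :=
  ∃ M : Set (Finset α), IsSubcomplex M K ∧ Collapses K M ∧
    K \ M ⊆ L ∧ twoSimplices K \ M = twoSimplices L

/-- A 2-complex is erasable if it collapses to a complex of dimension at most 1. -/
def Erasable (K : Set (Finset α)) : Prop :=
  ∃ L : Set (Finset α), Collapses K L ∧ ∀ σ ∈ L, σ.card ≤ 2

/-- A collapse of `K` onto `M` induced by the gradient `V`: `K ∖ M` is a union of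
pairs of `V`. -/
def InducedCollapse (K M : Set (Finset α)) (V : Set (Finset α × Finset α)) : Prop :=
  IsSubcomplex M K ∧
    ∀ ρ ∈ K \ M, ∃ p ∈ V, (ρ = p.1 ∨ ρ = p.2) ∧ p.1 ∈ K \ M ∧ p.2 ∈ K \ M

/-- `σ` is eventually free in `K`. -/
def EventuallyFree (K : Set (Finset α)) (σ : Finset α) : Prop :=
  ∃ L : Set (Finset α), Collapses K L ∧ IsFreeFace L σ

/-- `σ` is eventually free in `K` through the gradient `V`. -/
def EventuallyFreeThrough (K : Set (Finset α)) (V : Set (Finset α × Finset α))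
    (σ : Finset α) : Prop :=
  ∃ L : Set (Finset α), InducedCollapse K L V ∧ Collapses K L ∧ IsFreeFace L σ

/-- `L` is erasable in `K` through the gradient `V`. -/
def ErasableThrough (K L : Set (Finset α)) (V : Set (Finset α × Finset α)) : Prop :=
  ∃ M : Set (Finset α), InducedCollapse K M V ∧ Collapses K M ∧
    K \ M ⊆ L ∧ twoSimplices K \ M = twoSimplices L

/-- A discrete Morse function on `K`: monotone, and any two distinct simplices with
the same value form a facet pair (hence every level set is a singleton or such a pair). -/
def IsDiscreteMorse (K : Set (Finset α)) (f : Finset α → ℝ) : Prop :=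
  (∀ σ ∈ K, ∀ τ ∈ K, σ ⊆ τ → f σ ≤ f τ) ∧
  (∀ σ ∈ K, ∀ τ ∈ K, σ ≠ τ → f σ = f τ → IsFacet σ τ ∨ IsFacet τ σ)

/-- `er K`: the minimum number of 2-simplices whose removal makes `K` erasable. -/
noncomputable def er (K : Set (Finset α)) : ℕ :=
  sInf {n | ∃ C : Set (Finset α), C ⊆ twoSimplices K ∧ Erasable (K \ C) ∧ n = C.ncard}

/-- The maximum number of regular (matched) simplices over all gradient vector
fields on `K`. -/
noncomputable def optMaxMM (K : Set (Finset α)) : ℕ :=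
  sSup {n | ∃ V : Set (Finset α × Finset α), IsDGVF K V ∧ n = regularCount V}

/-- An oriented graph: a directed graph with no loops and no anti-parallel pairs. -/
def Oriented (E : Finset (α × α)) : Prop :=
  ∀ e ∈ E, e.1 ≠ e.2 ∧ (e.2, e.1) ∉ E

def outdeg [DecidableEq α] (F : Finset (α × α)) (v : α) : ℕ :=
  (F.filter fun e => e.1 = v).card

def indeg [DecidableEq α] (F : Finset (α × α)) (v : α) : ℕ :=
  (F.filter fun e => e.2 = v).card

/-- Total degree (in-degree plus out-degree) at most 3 at every vertex. -/
def Degree3 [DecidableEq α] (E : Finset (α × α)) : Prop :=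
  ∀ v : α, indeg E v + outdeg E v ≤ 3

/-- The underlying undirected graph (on the whole vertex type) is connected. -/
def GraphConnected (E : Finset (α × α)) : Prop :=
  ∀ x y : α, Relation.ReflTransGen (fun a b : α => (a, b) ∈ E ∨ (b, a) ∈ E) x y

/-- An edge set is acyclic if it contains no directed cycle. -/
def AcyclicEdges (A : Set (α × α)) : Prop :=
  ∀ x : α, ¬ Relation.TransGen (fun a b : α => (a, b) ∈ A) x x

/-- The maximum number of edges of an acyclic subgraph of `E`. -/
noncomputable def maxAcyclic [DecidableEq α] (E : Finset (α × α)) : ℕ :=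
  sSup {n | ∃ A : Finset (α × α), A ⊆ E ∧ AcyclicEdges (↑A : Set (α × α)) ∧ n = A.card}

/-- The minimum cardinality of a feedback arc set of `E`. -/
noncomputable def optMinFAS [DecidableEq α] (E : Finset (α × α)) : ℕ :=
  sInf {n | ∃ F : Finset (α × α), F ⊆ E ∧
    AcyclicEdges (↑(E \ F) : Set (α × α)) ∧ n = F.card}

/-- The thirteen triangles of the modified dunce hat, with vertices
`q=0, r=1, s=2, t=3, u=4, v=5, w=6`. -/
def dunceTriangles : Set (Finset (Fin 7)) :=
  {{1, 3, 5}, {1, 3, 6}, {3, 4, 5}, {0, 4, 5}, {0, 2, 5}, {1, 2, 5}, {0, 1, 2},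
   {0, 1, 4}, {1, 4, 6}, {0, 4, 6}, {0, 2, 6}, {2, 3, 6}, {2, 3, 4}}

/-- The modified dunce hat: the thirteen triangles together with all their
nonempty subsets. Distinguished simplices: `ω = {s,u} = {2,4}`, `η = {2,3}`,
`φ = {t,v} = {3,5}`, `ψ = {t,w} = {3,6}`, `Γ = {s,t,u} = {2,3,4}`. -/
def modifiedDunceHat : Set (Finset (Fin 7)) :=
  {σ | σ.Nonempty ∧ ∃ τ ∈ dunceTriangles, σ ⊆ τ}

/-- The vertex identifications defining `K(G,H)` (rules (b)-(e) of the construction),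
on the disjoint union of copies of the modified dunce hat indexed by the edges.
Here `E` is the edge set of `G`, `F ⊆ E` the edge set of the subgraph `H`, and
`lt` the fixed linear order on edges.  Vertex indices: `s=2, t=3, u=4, v=5, w=6`. -/
def glueRel [DecidableEq α] (E F : Finset (α × α)) (lt : α × α → α × α → Prop) :
    (α × α) × Fin 7 → (α × α) × Fin 7 → Prop := fun x y =>
  -- (b): indeg_H(v) = 0, outdeg_H(v) > 0: identify the vertices s_e over outgoing edges
  (∃ e ∈ F, ∃ e' ∈ F, e.1 = e'.1 ∧ indeg F e.1 = 0 ∧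
    x = (e, (2 : Fin 7)) ∧ y = (e', (2 : Fin 7))) ∨
  -- (c): outdeg_H(v) = 0, indeg_H(v) > 0: identify the vertices t_e over incoming edges
  (∃ e ∈ F, ∃ e' ∈ F, e.2 = e'.2 ∧ outdeg F e.2 = 0 ∧
    x = (e, (3 : Fin 7)) ∧ y = (e', (3 : Fin 7))) ∨
  -- (d)(i): indeg_G(v) = 1, outdeg_G(v) = 2, j incoming, k ≺ l outgoing, j,k ∈ F:
  -- identify φ_j ∼ ω_k via u_k ∼ v_j and s_k ∼ t_j
  (∃ j ∈ F, ∃ k ∈ F, ∃ l ∈ E, j.2 = k.1 ∧ l.1 = k.1 ∧ k ≠ l ∧ lt k l ∧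
    indeg E k.1 = 1 ∧ outdeg E k.1 = 2 ∧
    ((x = (k, (4 : Fin 7)) ∧ y = (j, (5 : Fin 7))) ∨
     (x = (k, (2 : Fin 7)) ∧ y = (j, (3 : Fin 7))))) ∨
  -- (d)(ii): j incoming, k ≺ l outgoing, j,l ∈ F:
  -- identify ψ_j ∼ ω_l via u_l ∼ w_j and s_l ∼ t_j
  (∃ j ∈ F, ∃ l ∈ F, ∃ k ∈ E, j.2 = l.1 ∧ k.1 = l.1 ∧ k ≠ l ∧ lt k l ∧
    indeg E l.1 = 1 ∧ outdeg E l.1 = 2 ∧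
    ((x = (l, (4 : Fin 7)) ∧ y = (j, (6 : Fin 7))) ∨
     (x = (l, (2 : Fin 7)) ∧ y = (j, (3 : Fin 7))))) ∨
  -- (e): indeg_G(v) ∈ {1,2}, outdeg_G(v) = 1, j outgoing, k incoming, j,k ∈ F:
  -- identify ω_j ∼ φ_k via u_j ∼ v_k and s_j ∼ t_k
  (∃ j ∈ F, ∃ k ∈ F, k.2 = j.1 ∧
    (indeg E j.1 = 1 ∨ indeg E j.1 = 2) ∧ outdeg E j.1 = 1 ∧
    ((x = (j, (4 : Fin 7)) ∧ y = (k, (5 : Fin 7))) ∨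
     (x = (j, (2 : Fin 7)) ∧ y = (k, (3 : Fin 7)))))

/-- The image in the quotient of a simplex `σ` of the copy `D_e` of the
modified dunce hat. -/
noncomputable def qmap [DecidableEq α] (E F : Finset (α × α))
    (lt : α × α → α × α → Prop) (e : α × α) (σ : Finset (Fin 7)) :
    Finset (Quot (glueRel E F lt)) :=
  letI : DecidableEq (Quot (glueRel E F lt)) := Classical.decEq _
  σ.image fun i => Quot.mk (glueRel E F lt) (e, i)

/-- The complex `K(G,H)`. -/
def KGH [DecidableEq α] (E F : Finset (α × α)) (lt : α × α → α × α → Prop) :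
    Set (Finset (Quot (glueRel E F lt))) :=
  {ρ | ∃ e ∈ F, ∃ σ ∈ modifiedDunceHat, ρ = qmap E F lt e σ}

/-- The copy `D_e` of the modified dunce hat inside `K(G,H)`. -/
def gadgetIn [DecidableEq α] (E F : Finset (α × α)) (lt : α × α → α × α → Prop)
    (e : α × α) : Set (Finset (Quot (glueRel E F lt))) :=
  {ρ | ∃ σ ∈ modifiedDunceHat, ρ = qmap E F lt e σ}

/-- The edge `ω_e = {s_e, u_e}` inside `K(G,H)`. -/
noncomputable def omegaIn [DecidableEq α] (E F : Finset (α × α))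
    (lt : α × α → α × α → Prop) (e : α × α) : Finset (Quot (glueRel E F lt)) :=
  qmap E F lt e {2, 4}

/-- The triangle `Γ_e = {s_e, t_e, u_e}` inside `K(G,H)`. -/
noncomputable def gammaIn [DecidableEq α] (E F : Finset (α × α))
    (lt : α × α → α × α → Prop) (e : α × α) : Finset (Quot (glueRel E F lt)) :=
  qmap E F lt e {2, 3, 4}

/-- The set of edges `f` of `G` whose gadget `D_f` contains a critical 2-simplex
of the gradient `V`. -/
def criticalEdgeSet [DecidableEq α] (E : Finset (α × α))
    (lt : α × α → α × α → Prop)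
    (V : Set (Finset (Quot (glueRel E E lt)) × Finset (Quot (glueRel E E lt)))) :
    Set (α × α) :=
  {f | f ∈ E ∧ ∃ σ ∈ gadgetIn E E lt f, σ.card = 3 ∧ IsCritical (KGH E E lt) V σ}


section Aux

open Relation

variable {α : Type*} [DecidableEq α]

/-- The thirteen triangles as a `Finset`. -/
def dunceT : Finset (Finset (Fin 7)) :=
  {{1, 3, 5}, {1, 3, 6}, {3, 4, 5}, {0, 4, 5}, {0, 2, 5}, {1, 2, 5}, {0, 1, 2},
   {0, 1, 4}, {1, 4, 6}, {0, 4, 6}, {0, 2, 6}, {2, 3, 6}, {2, 3, 4}}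

lemma mem_dunceT_iff {τ : Finset (Fin 7)} : τ ∈ dunceTriangles ↔ τ ∈ dunceT := by
  simp [dunceTriangles, dunceT]

/-- Invariant of the gluing relation. -/
def iotaInv (E : Finset (α × α)) (lt : α × α → α × α → Prop) (x : (α × α) × Fin 7) :
    Option ((α × α) × Fin 7) × α × Bool × Prop :=
  ⟨if x.2.val ≤ 1 then some x else none,
   if x.2.val = 3 ∨ x.2.val = 5 ∨ x.2.val = 6 then x.1.2 else x.1.1,
   decide (x.2.val = 2 ∨ x.2.val = 3),
   x.2.val = 6 ∨ (x.2.val = 4 ∧ ∃ k ∈ E, k ≠ x.1 ∧ k.1 = x.1.1 ∧ lt k x.1 ∧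
     indeg E x.1.1 = 1 ∧ outdeg E x.1.1 = 2)⟩

@[simp] lemma finVal0 : (((0:Fin 7))).val = 0 := rfl
@[simp] lemma finVal1 : (((1:Fin 7))).val = 1 := rfl
@[simp] lemma finVal2 : (((2:Fin 7))).val = 2 := rfl
@[simp] lemma finVal3 : (((3:Fin 7))).val = 3 := rfl
@[simp] lemma finVal4 : (((4:Fin 7))).val = 4 := rfl
@[simp] lemma finVal5 : (((5:Fin 7))).val = 5 := rfl
@[simp] lemma finVal6 : (((6:Fin 7))).val = 6 := rfl

lemma three_le_outdeg {E : Finset (α × α)} {a b c : α × α} {v : α}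
    (ha : a ∈ E) (hb : b ∈ E) (hc : c ∈ E)
    (h1 : a.1 = v) (h2 : b.1 = v) (h3 : c.1 = v)
    (hab : a ≠ b) (hac : a ≠ c) (hbc : b ≠ c) : 3 ≤ outdeg E v := by
  have hsub : ({a, b, c} : Finset (α × α)) ⊆ E.filter (fun e => e.1 = v) := by
    intro x hx
    simp only [Finset.mem_insert, Finset.mem_singleton] at hx
    rcases hx with rfl | rfl | rfl <;> simp [Finset.mem_filter, *]
  have hcard := Finset.card_le_card hsub
  rw [Finset.card_insert_of_notMem (by simp [hab, hac]),
    Finset.card_insert_of_notMem (by simp [hbc]), Finset.card_singleton] at hcard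
  exact hcard

lemma iotaInv_glue {E : Finset (α × α)} {lt : α × α → α × α → Prop}
    [IsStrictTotalOrder (α × α) lt] :
    ∀ x y, glueRel E E lt x y → iotaInv E lt x = iotaInv E lt y := by
  intro x y h
  rcases h with ⟨e, he, e', he', h1, h0, rfl, rfl⟩ | ⟨e, he, e', he', h1, h0, rfl, rfl⟩ |
    ⟨j, hj, k, hk, l, hl, hjk, hlk, hkl, hltkl, hind, houtd, hxy⟩ |
    ⟨j, hj, l, hl, k, hk, hjl, hkl1, hkl2, hlt, hind, houtd, hxy⟩ |
    ⟨j, hj, k, hk, hkj, hind, houtd, hxy⟩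
  · simp [iotaInv, h1]
  · simp [iotaInv, h1]
  · -- case (d)(i)
    rcases hxy with ⟨rfl, rfl⟩ | ⟨rfl, rfl⟩
    · refine Prod.ext (by simp [iotaInv]) (Prod.ext (by simp [iotaInv, hjk]) (Prod.ext (by simp [iotaInv]) ?_))
      show ((4:Fin 7).val = 6 ∨ _) = ((5:Fin 7).val = 6 ∨ _)
      apply propext
      constructor
      · rintro (h | ⟨-, k', hk'E, hk'ne, hk'1, hk'lt, -, -⟩)
        · simp at h
        · exfalso
          dsimp only at hk'ne hk'1 hk'lt
          have hk'l : k' ≠ l := by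
            rintro rfl
            exact (irrefl_of lt k') (trans_of lt hk'lt hltkl)
          have h3 := three_le_outdeg hk'E hk hl hk'1 rfl hlk hk'ne hk'l hkl
          omega
      · rintro (h | ⟨h, -⟩) <;> simp at h
    · simp [iotaInv, hjk]
  · -- case (d)(ii)
    rcases hxy with ⟨rfl, rfl⟩ | ⟨rfl, rfl⟩
    · refine Prod.ext (by simp [iotaInv]) (Prod.ext (by simp [iotaInv, hjl]) (Prod.ext (by simp [iotaInv]) ?_))
      show ((4:Fin 7).val = 6 ∨ _) = ((6:Fin 7).val = 6 ∨ _)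
      apply propext
      apply iff_of_true
      · exact Or.inr ⟨rfl, k, hk, hkl2, hkl1, hlt, hind, houtd⟩
      · exact Or.inl rfl
    · simp [iotaInv, hjl]
  · -- case (e)
    rcases hxy with ⟨rfl, rfl⟩ | ⟨rfl, rfl⟩
    · refine Prod.ext (by simp [iotaInv]) (Prod.ext (by simp [iotaInv, hkj]) (Prod.ext (by simp [iotaInv]) ?_))
      show ((4:Fin 7).val = 6 ∨ _) = ((5:Fin 7).val = 6 ∨ _)
      apply propext
      constructor
      · rintro (h | ⟨-, k', hk'E, hk'ne, hk'1, hk'lt, hind', houtd'⟩)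
        · simp at h
        · dsimp only at houtd'
          omega
      · rintro (h | ⟨h, -⟩) <;> simp at h
    · simp [iotaInv, hkj]

lemma vtx_inj {E : Finset (α × α)} {lt : α × α → α × α → Prop}
    [IsStrictTotalOrder (α × α) lt] {e : α × α} (hne : e.1 ≠ e.2) {i i' : Fin 7}
    (h : Quot.mk (glueRel E E lt) (e, i) = Quot.mk (glueRel E E lt) (e, i')) : i = i' := by
  have hio : iotaInv E lt (e, i) = iotaInv E lt (e, i') :=
    congrArg (Quot.lift (iotaInv E lt) (iotaInv_glue)) h
  fin_cases i <;> fin_cases i' <;>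
    first
      | rfl
      | (exfalso;
         simp only [iotaInv, Prod.ext_iff, eq_iff_iff] at hio;
         simp_all)

end Aux

section Aux2
set_option linter.unusedSectionVars false
set_option maxRecDepth 4000

open Relation

variable {α : Type*} [DecidableEq α] {E : Finset (α × α)} {lt : α × α → α × α → Prop}
  [IsStrictTotalOrder (α × α) lt]

lemma mem_qmap {e : α × α} {σ : Finset (Fin 7)} {a : Quot (glueRel E E lt)} :
    a ∈ qmap E E lt e σ ↔ ∃ i ∈ σ, Quot.mk (glueRel E E lt) (e, i) = a := by
  classical
  simp [qmap, Finset.mem_image]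

lemma qmap_mono {e : α × α} {σ σ' : Finset (Fin 7)} (h : σ ⊆ σ') :
    qmap E E lt e σ ⊆ qmap E E lt e σ' := by
  intro a ha
  rw [mem_qmap] at ha ⊢
  obtain ⟨i, hi, hq⟩ := ha
  exact ⟨i, h hi, hq⟩

lemma qmap_card {e : α × α} (hne : e.1 ≠ e.2) (σ : Finset (Fin 7)) :
    (qmap E E lt e σ).card = σ.card := by
  classical
  exact Finset.card_image_of_injOn (fun i _ i' _ h => vtx_inj hne h)

lemma qmap_inj {e : α × α} (hne : e.1 ≠ e.2) {σ σ' : Finset (Fin 7)}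
    (h : qmap E E lt e σ = qmap E E lt e σ') : σ = σ' := by
  ext i
  constructor <;> intro hi
  · have : Quot.mk (glueRel E E lt) (e, i) ∈ qmap E E lt e σ' := by
      rw [← h, mem_qmap]; exact ⟨i, hi, rfl⟩
    rw [mem_qmap] at this
    obtain ⟨i', hi', hq⟩ := this
    exact (vtx_inj hne hq.symm) ▸ hi'
  · have : Quot.mk (glueRel E E lt) (e, i) ∈ qmap E E lt e σ := by
      rw [h, mem_qmap]; exact ⟨i, hi, rfl⟩
    rw [mem_qmap] at this
    obtain ⟨i', hi', hq⟩ := this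
    exact (vtx_inj hne hq.symm) ▸ hi'

lemma dunceT_card' : ∀ τ ∈ dunceT, τ.card = 3 := by decide

lemma dunceT_card {τ : Finset (Fin 7)} (h : τ ∈ dunceT) : τ.card = 3 := dunceT_card' τ h

lemma mem_mdh_of_subset {τ σ : Finset (Fin 7)} (hτ : τ ∈ dunceT) (hσ : σ ⊆ τ)
    (hne : σ.Nonempty) : σ ∈ modifiedDunceHat :=
  ⟨hne, τ, mem_dunceT_iff.mpr hτ, hσ⟩

lemma dunceT_mem_mdh {τ : Finset (Fin 7)} (hτ : τ ∈ dunceT) : τ ∈ modifiedDunceHat :=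
  mem_mdh_of_subset hτ (subset_refl τ) (Finset.card_pos.mp (by rw [dunceT_card hτ]; norm_num))

lemma qmap_mem_KGH {e : α × α} (he : e ∈ E) {σ : Finset (Fin 7)}
    (hσ : σ ∈ modifiedDunceHat) : qmap E E lt e σ ∈ KGH E E lt :=
  ⟨e, he, σ, hσ, rfl⟩

lemma KGH_card_le {ρ : Finset (Quot (glueRel E E lt))} (hρ : ρ ∈ KGH E E lt) :
    ρ.card ≤ 3 := by
  classical
  obtain ⟨e, -, σ, ⟨-, τ, hτ, hστ⟩, rfl⟩ := hρ
  have h1 : (qmap E E lt e σ).card ≤ σ.card := Finset.card_image_le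
  have h2 : σ.card ≤ τ.card := Finset.card_le_card hστ
  have h3 : τ.card = 3 := dunceT_card (mem_dunceT_iff.mp hτ)
  omega

/-- Two distinct gadgets share no triangle. -/
lemma copy_eq (hor : Oriented E) {e e' : α × α} (he : e ∈ E) (he' : e' ∈ E)
    {τ τ' : Finset (Fin 7)} (hτ : τ ∈ dunceT) (hτ' : τ' ∈ dunceT)
    (h : qmap E E lt e τ = qmap E E lt e' τ') : e = e' := by
  have hmem : ∀ i ∈ τ, ∃ i' ∈ τ', Quot.mk (glueRel E E lt) (e, i) =
      Quot.mk (glueRel E E lt) (e', i') := by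
    intro i hi
    have : Quot.mk (glueRel E E lt) (e, i) ∈ qmap E E lt e' τ' := by
      rw [← h, mem_qmap]; exact ⟨i, hi, rfl⟩
    rw [mem_qmap] at this
    obtain ⟨i', hi', hq⟩ := this
    exact ⟨i', hi', hq.symm⟩
  have hio : ∀ {i i' : Fin 7}, Quot.mk (glueRel E E lt) (e, i) =
      Quot.mk (glueRel E E lt) (e', i') → iotaInv E lt (e, i) = iotaInv E lt (e', i') :=
    fun h => congrArg (Quot.lift (iotaInv E lt) (iotaInv_glue)) h
  have hcover : ∀ τ ∈ dunceT, (((0:Fin 7)) ∈ τ ∨ ((1:Fin 7)) ∈ τ) ∨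
      ((((2:Fin 7)) ∈ τ ∨ ((4:Fin 7)) ∈ τ) ∧
       (((3:Fin 7)) ∈ τ ∨ ((5:Fin 7)) ∈ τ ∨ ((6:Fin 7)) ∈ τ)) := by
    clear * -; decide
  -- endpoint extraction from the second component of the invariant
  have hend : ∀ {i i' : Fin 7}, i.val = 2 ∨ i.val = 4 → i ∈ τ →
      e.1 = e'.1 ∨ e.1 = e'.2 := by
    intro i i' hii hmemi
    obtain ⟨j, hj, hq⟩ := hmem i hmemi
    have h2 := congrArg (fun z => z.2.1) (hio hq)
    simp only [iotaInv] at h2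
    rcases hii with h4 | h4 <;>
      · rw [if_neg (by omega)] at h2
        split at h2
        · exact Or.inr h2
        · exact Or.inl h2
  have hend2 : ∀ {i : Fin 7}, i.val = 3 ∨ i.val = 5 ∨ i.val = 6 → i ∈ τ →
      e.2 = e'.1 ∨ e.2 = e'.2 := by
    intro i hii hmemi
    obtain ⟨j, hj, hq⟩ := hmem i hmemi
    have h2 := congrArg (fun z => z.2.1) (hio hq)
    simp only [iotaInv] at h2
    rw [if_pos (by omega)] at h2
    split at h2
    · exact Or.inr h2
    · exact Or.inl h2
  rcases hcover τ hτ with (h0 | h1) | ⟨h24, h356⟩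
  · -- a vertex 0 in τ : singleton class
    obtain ⟨j, hj, hq⟩ := hmem 0 h0
    have h2 := congrArg (fun z => z.1) (hio hq)
    simp only [iotaInv] at h2
    rw [if_pos (by norm_num)] at h2
    split at h2
    · exact congrArg Prod.fst (Option.some_injective _ h2)
    · exact absurd h2 (by simp)
  · obtain ⟨j, hj, hq⟩ := hmem 1 h1
    have h2 := congrArg (fun z => z.1) (hio hq)
    simp only [iotaInv] at h2
    rw [if_pos (by norm_num)] at h2
    split at h2
    · exact congrArg Prod.fst (Option.some_injective _ h2)
    · exact absurd h2 (by simp)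
  · have hA : e.1 = e'.1 ∨ e.1 = e'.2 := by
      rcases h24 with h | h
      · exact hend (i := 2) (i' := 2) (by norm_num) h
      · exact hend (i := 4) (i' := 4) (by norm_num) h
    have hB : e.2 = e'.1 ∨ e.2 = e'.2 := by
      rcases h356 with h | h | h
      · exact hend2 (by norm_num) h
      · exact hend2 (by norm_num) h
      · exact hend2 (by norm_num) h
    have hne : e.1 ≠ e.2 := (hor e he).1
    rcases hA with hA | hA <;> rcases hB with hB | hB
    · exact absurd (hA.trans hB.symm) hne
    · exact Prod.ext hA hB
    · exfalso
      have : e' = (e.2, e.1) := Prod.ext hB.symm hA.symm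
      exact (hor e he).2 (this ▸ he')
    · exact absurd (hA.trans hB.symm) hne

end Aux2

section Aux3
set_option linter.unusedSectionVars false
set_option maxRecDepth 8000

open Relation

variable {α : Type*} [DecidableEq α] {E : Finset (α × α)} {lt : α × α → α × α → Prop}
  [IsStrictTotalOrder (α × α) lt]

lemma transGen_lift {β γ : Type*} {r : β → β → Prop} {s : γ → γ → Prop} {m : β → γ}
    (hm : ∀ a b, r a b → Relation.TransGen s (m a) (m b)) {a b : β}
    (h : Relation.TransGen r a b) : Relation.TransGen s (m a) (m b) := by
  induction h with
  | single h => exact hm _ _ h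
  | tail _ h2 ih => exact ih.trans (hm _ _ h2)

lemma reflTransGen_lift {β γ : Type*} {r : β → β → Prop} {s : γ → γ → Prop} {m : β → γ}
    (hm : ∀ a b, r a b → Relation.TransGen s (m a) (m b)) {a b : β}
    (h : Relation.ReflTransGen r a b) : Relation.ReflTransGen s (m a) (m b) := by
  induction h with
  | refl => exact Relation.ReflTransGen.refl
  | tail _ h2 ih => exact ih.trans (hm _ _ h2).to_reflTransGen

/-- The main gadget lemma: if the gadget `D_e` has no critical triangle, then
`ω_e` is matched with `Γ_e` and every triangle of `D_e` is reachable from `Γ_e`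
by a `V`-path. -/
lemma gadget (hor : Oriented E)
    {V : Set (Finset (Quot (glueRel E E lt)) × Finset (Quot (glueRel E E lt)))}
    (hV : IsDGVF (KGH E E lt) V) {e : α × α} (he : e ∈ E)
    (hcrit : ∀ σ ∈ gadgetIn E E lt e, σ.card = 3 → ¬ IsCritical (KGH E E lt) V σ) :
    (qmap E E lt e {2, 4}, qmap E E lt e {2, 3, 4}) ∈ V ∧
    ∀ τf ∈ dunceT, Relation.ReflTransGen (VStep (KGH E E lt) V)
      (qmap E E lt e {2, 3, 4}) (qmap E E lt e τf) := by
  classical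
  have hne : e.1 ≠ e.2 := (hor e he).1
  -- every triangle of the gadget is matched with one of its own edges
  have hM : ∀ τ ∈ dunceT, ∃ σ, σ ⊆ τ ∧ σ.card = 2 ∧
      (qmap E E lt e σ, qmap E E lt e τ) ∈ V := by
    intro τ hτ
    have hτK : qmap E E lt e τ ∈ KGH E E lt := qmap_mem_KGH he (dunceT_mem_mdh hτ)
    have hτ3 : (qmap E E lt e τ).card = 3 := by rw [qmap_card hne, dunceT_card hτ]
    have hnc := hcrit _ ⟨τ, dunceT_mem_mdh hτ, rfl⟩ hτ3
    have hp' : ∃ p ∈ V, qmap E E lt e τ = p.1 ∨ qmap E E lt e τ = p.2 := by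
      by_contra hcon
      push_neg at hcon
      exact hnc ⟨hτK, hcon⟩
    obtain ⟨p, hp, hp12⟩ := hp'
    have hfac := (hV.1 p hp).2.2
    have hple := KGH_card_le (hV.1 p hp).2.1
    rcases hp12 with h1 | h2
    · exfalso
      obtain ⟨-, hfc⟩ := hfac
      rw [← h1, hτ3] at hfc
      omega
    · have hsub : p.1 ⊆ qmap E E lt e τ := h2 ▸ hfac.1
      have hcard : p.1.card = 2 := by
        have hfc := hfac.2
        rw [← h2, hτ3] at hfc
        omega
      set σ' : Finset (Fin 7) := τ.filter (fun i => Quot.mk (glueRel E E lt) (e, i) ∈ p.1)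
        with hσ'
      have himg : qmap E E lt e σ' = p.1 := by
        ext a
        rw [mem_qmap]
        constructor
        · rintro ⟨i, hi, rfl⟩
          exact (Finset.mem_filter.mp hi).2
        · intro ha
          have hm : a ∈ qmap E E lt e τ := hsub ha
          rw [mem_qmap] at hm
          obtain ⟨i, hi, rfl⟩ := hm
          exact ⟨i, Finset.mem_filter.mpr ⟨hi, ha⟩, rfl⟩
      refine ⟨σ', Finset.filter_subset _ _, ?_, ?_⟩
      · have hc := qmap_card (E := E) (lt := lt) hne σ'
        rw [himg] at hc
        omega
      · rw [himg, h2]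
        exact hp
  choose! M hM1 hM2 hM3 using hM
  set R : Finset (Fin 7) → Finset (Fin 7) → Prop :=
    fun τ τ' => τ ∈ dunceT ∧ τ' ∈ dunceT ∧ τ ≠ τ' ∧ M τ' ⊆ τ with hR
  have hstep : ∀ τ τ', R τ τ' →
      Relation.TransGen (VStep (KGH E E lt) V) (qmap E E lt e τ) (qmap E E lt e τ') := by
    rintro τ τ' ⟨hτ, hτ', hne', hsub⟩
    have hMmdh : M τ' ∈ modifiedDunceHat :=
      mem_mdh_of_subset hτ' (hM1 τ' hτ')
        (Finset.card_pos.mp (by rw [hM2 τ' hτ']; norm_num))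
    have s1 : VStep (KGH E E lt) V (qmap E E lt e τ) (qmap E E lt e (M τ')) := by
      left
      refine ⟨qmap_mem_KGH he (dunceT_mem_mdh hτ), qmap_mem_KGH he hMmdh,
        ⟨qmap_mono hsub, ?_⟩, ?_⟩
      · rw [qmap_card hne, qmap_card hne, dunceT_card hτ, hM2 τ' hτ']
      · intro hmem
        have huniq := hV.2.1 _ hmem _ (hM3 τ' hτ') (Or.inl rfl)
        have heqq : qmap E E lt e τ = qmap E E lt e τ' := congrArg Prod.snd huniq
        exact hne' (qmap_inj hne heqq)
    exact (Relation.TransGen.single s1).tail (Or.inr (hM3 τ' hτ'))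
  have hRacyc : ∀ τ, ¬ Relation.TransGen R τ τ := fun τ hcyc =>
    hV.2.2 (qmap E E lt e τ) (transGen_lift hstep hcyc)
  haveI : IsTrans (Finset (Fin 7)) (fun a b => Relation.TransGen R a b) :=
    ⟨fun a b c h1 h2 => h1.trans h2⟩
  haveI : IsIrrefl (Finset (Fin 7)) (fun a b => Relation.TransGen R a b) := ⟨hRacyc⟩
  have hwf : WellFounded (fun a b : Finset (Fin 7) => Relation.TransGen R a b) :=
    Finite.wellFounded_of_trans_of_irrefl _
  have fact1 : ∀ τ0 ∈ dunceT, ∀ σ : Finset (Fin 7), σ ⊆ τ0 → σ.card = 2 →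
      (∀ τ ∈ dunceT, τ ≠ τ0 → ¬ σ ⊆ τ) → σ = {2, 4} ∧ τ0 = {2, 3, 4} := by
    clear * -
    decide
  have nosrc : ∀ τ0 ∈ dunceT, (∀ τ ∈ dunceT, ¬ R τ τ0) →
      M τ0 = {2, 4} ∧ τ0 = {2, 3, 4} := by
    intro τ0 hτ0 hno
    exact fact1 τ0 hτ0 (M τ0) (hM1 τ0 hτ0) (hM2 τ0 hτ0)
      (fun τ hτd hneq hsub => hno τ hτd ⟨hτd, hτ0, hneq, hsub⟩)
  have hΓd : ({2, 3, 4} : Finset (Fin 7)) ∈ dunceT := by decide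
  have G1 : (qmap E E lt e {2, 4}, qmap E E lt e {2, 3, 4}) ∈ V := by
    obtain ⟨τ0, hτ0S, hmin⟩ := hwf.has_min {x | x ∈ dunceT} ⟨{2, 3, 4}, hΓd⟩
    have hno : ∀ τ ∈ dunceT, ¬ R τ τ0 := fun τ hτ hRτ =>
      hmin τ hτ (Relation.TransGen.single hRτ)
    obtain ⟨hMe, hτ0e⟩ := nosrc τ0 hτ0S hno
    have := hM3 τ0 hτ0S
    rw [hMe, hτ0e] at this
    exact this
  have hreach : ∀ τ ∈ dunceT, Relation.ReflTransGen R {2, 3, 4} τ := by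
    by_contra hcon
    push_neg at hcon
    obtain ⟨τ1, hτ1, hnr⟩ := hcon
    obtain ⟨τ0, hτ0S, hmin⟩ :=
      hwf.has_min {x | x ∈ dunceT ∧ ¬ Relation.ReflTransGen R {2, 3, 4} x} ⟨τ1, hτ1, hnr⟩
    have hno : ∀ τ ∈ dunceT, ¬ R τ τ0 := by
      intro τ hτ hRτ
      by_cases hr : Relation.ReflTransGen R {2, 3, 4} τ
      · exact hτ0S.2 (hr.tail hRτ)
      · exact hmin τ ⟨hτ, hr⟩ (Relation.TransGen.single hRτ)
    obtain ⟨-, hτ0e⟩ := nosrc τ0 hτ0S.1 hno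
    exact hτ0S.2 (by rw [hτ0e])
  exact ⟨G1, fun τf hτf => reflTransGen_lift hstep (hreach τf hτf)⟩

end Aux3

section Aux4
set_option linter.unusedSectionVars false
set_option maxRecDepth 8000

open Relation

variable {α : Type*} [DecidableEq α] {E : Finset (α × α)} {lt : α × α → α × α → Prop}
  [IsStrictTotalOrder (α × α) lt]

lemma qmap_pair_eq {e e' : α × α} {i j i' j' : Fin 7}
    (h1 : Quot.mk (glueRel E E lt) (e, i) = Quot.mk (glueRel E E lt) (e', i'))
    (h2 : Quot.mk (glueRel E E lt) (e, j) = Quot.mk (glueRel E E lt) (e', j')) :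
    qmap E E lt e {i, j} = qmap E E lt e' {i', j'} := by
  ext a
  rw [mem_qmap, mem_qmap]
  constructor
  · rintro ⟨x, hx, rfl⟩
    simp only [Finset.mem_insert, Finset.mem_singleton] at hx
    rcases hx with rfl | rfl
    · exact ⟨i', by simp, h1.symm⟩
    · exact ⟨j', by simp, h2.symm⟩
  · rintro ⟨x, hx, rfl⟩
    simp only [Finset.mem_insert, Finset.mem_singleton] at hx
    rcases hx with rfl | rfl
    · exact ⟨i, by simp, h1⟩
    · exact ⟨j, by simp, h2⟩

lemma junction (hor : Oriented E) (hdeg : Degree3 E) {f g : α × α}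
    (hf : f ∈ E) (hg : g ∈ E) (hfg : f.2 = g.1) :
    qmap E E lt g {2, 4} = qmap E E lt f {3, 5} ∨
    qmap E E lt g {2, 4} = qmap E E lt f {3, 6} := by
  have hin : 1 ≤ indeg E g.1 := by
    have h1 : f ∈ E.filter (fun e => e.2 = g.1) := Finset.mem_filter.mpr ⟨hf, hfg⟩
    have h2 := Finset.card_pos.mpr ⟨f, h1⟩
    unfold indeg
    omega
  have hout : 1 ≤ outdeg E g.1 := by
    have h1 : g ∈ E.filter (fun e => e.1 = g.1) := Finset.mem_filter.mpr ⟨hg, rfl⟩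
    have h2 := Finset.card_pos.mpr ⟨g, h1⟩
    unfold outdeg
    omega
  have hsum := hdeg g.1
  have hcases : outdeg E g.1 = 1 ∨ (outdeg E g.1 = 2 ∧ indeg E g.1 = 1) := by omega
  rcases hcases with h1 | ⟨h2, h1⟩
  · -- rule (e)
    have hindor : indeg E g.1 = 1 ∨ indeg E g.1 = 2 := by omega
    have r45 : glueRel E E lt (g, 4) (f, 5) :=
      Or.inr (Or.inr (Or.inr (Or.inr ⟨g, hg, f, hf, hfg, hindor, h1, Or.inl ⟨rfl, rfl⟩⟩)))
    have r23 : glueRel E E lt (g, 2) (f, 3) :=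
      Or.inr (Or.inr (Or.inr (Or.inr ⟨g, hg, f, hf, hfg, hindor, h1, Or.inr ⟨rfl, rfl⟩⟩)))
    exact Or.inl (qmap_pair_eq (Quot.sound r23) (Quot.sound r45))
  · -- rule (d): there is a second outgoing edge g'
    obtain ⟨g', hg'f, hg'ne⟩ :=
      Finset.exists_mem_ne (s := E.filter (fun e => e.1 = g.1))
        (by unfold outdeg at h2; omega) g
    obtain ⟨hg'E, hg'1⟩ := Finset.mem_filter.mp hg'f
    rcases @trichotomous _ lt _ g g' with hlt | heq | hgt
    · -- g is the smaller outgoing edge: rule (d)(i)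
      have r45 : glueRel E E lt (g, 4) (f, 5) :=
        Or.inr (Or.inr (Or.inl ⟨f, hf, g, hg, g', hg'E, hfg, hg'1, Ne.symm hg'ne, hlt,
          h1, h2, Or.inl ⟨rfl, rfl⟩⟩))
      have r23 : glueRel E E lt (g, 2) (f, 3) :=
        Or.inr (Or.inr (Or.inl ⟨f, hf, g, hg, g', hg'E, hfg, hg'1, Ne.symm hg'ne, hlt,
          h1, h2, Or.inr ⟨rfl, rfl⟩⟩))
      exact Or.inl (qmap_pair_eq (Quot.sound r23) (Quot.sound r45))
    · exact absurd heq.symm hg'ne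
    · -- g is the larger outgoing edge: rule (d)(ii)
      have r46 : glueRel E E lt (g, 4) (f, 6) :=
        Or.inr (Or.inr (Or.inr (Or.inl ⟨f, hf, g, hg, g', hg'E, hfg, hg'1, hg'ne, hgt,
          h1, h2, Or.inl ⟨rfl, rfl⟩⟩)))
      have r23 : glueRel E E lt (g, 2) (f, 3) :=
        Or.inr (Or.inr (Or.inr (Or.inl ⟨f, hf, g, hg, g', hg'E, hfg, hg'1, hg'ne, hgt,
          h1, h2, Or.inr ⟨rfl, rfl⟩⟩)))
      exact Or.inr (qmap_pair_eq (Quot.sound r23) (Quot.sound r46))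

lemma hop (hor : Oriented E) (hdeg : Degree3 E)
    {V : Set (Finset (Quot (glueRel E E lt)) × Finset (Quot (glueRel E E lt)))}
    (hV : IsDGVF (KGH E E lt) V) {f g : α × α}
    (hf : f ∈ (↑E : Set (α × α)) \ criticalEdgeSet E lt V)
    (hg : g ∈ (↑E : Set (α × α)) \ criticalEdgeSet E lt V)
    (hfg : f.2 = g.1) :
    Relation.TransGen (VStep (KGH E E lt) V)
      (qmap E E lt f {2, 3, 4}) (qmap E E lt g {2, 3, 4}) := by
  obtain ⟨hfE', hfns⟩ := hf
  obtain ⟨hgE', hgns⟩ := hg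
  have hfE : f ∈ E := hfE'
  have hgE : g ∈ E := hgE'
  have hcritf : ∀ σ ∈ gadgetIn E E lt f, σ.card = 3 → ¬ IsCritical (KGH E E lt) V σ :=
    fun σ hσ h3 hc => hfns ⟨hfE, σ, hσ, h3, hc⟩
  have hcritg : ∀ σ ∈ gadgetIn E E lt g, σ.card = 3 → ¬ IsCritical (KGH E E lt) V σ :=
    fun σ hσ h3 hc => hgns ⟨hgE, σ, hσ, h3, hc⟩
  have Gf := gadget hor hV hfE hcritf
  have Gg := gadget hor hV hgE hcritg
  have hnef : f.1 ≠ f.2 := (hor f hfE).1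
  have hfgne : f ≠ g := by
    intro h
    rw [h] at hfg
    exact (hor g hgE).1 hfg.symm
  rcases junction (lt := lt) hor hdeg hfE hgE hfg with hj | hj
  · have hpath := Gf.2 {1, 3, 5} (by decide)
    have hstep1 : VStep (KGH E E lt) V (qmap E E lt f {1, 3, 5}) (qmap E E lt f {3, 5}) := by
      left
      refine ⟨qmap_mem_KGH hfE (dunceT_mem_mdh (by decide)),
        qmap_mem_KGH hfE (mem_mdh_of_subset (by decide : ({1,3,5} : Finset (Fin 7)) ∈ dunceT)
          (by decide) (by decide)), ⟨qmap_mono (by decide), ?_⟩, ?_⟩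
      · rw [qmap_card (E := E) (lt := lt) hnef, qmap_card (E := E) (lt := lt) hnef]
        decide
      · intro hmem
        have hGg' : (qmap E E lt f {3, 5}, qmap E E lt g {2, 3, 4}) ∈ V := by
          rw [← hj]; exact Gg.1
        have huniq := hV.2.1 _ hmem _ hGg' (Or.inl rfl)
        have heqq : qmap E E lt f {1, 3, 5} = qmap E E lt g {2, 3, 4} :=
          congrArg Prod.snd huniq
        exact hfgne (copy_eq hor hfE hgE (by decide) (by decide) heqq)
    have hGg' : (qmap E E lt f {3, 5}, qmap E E lt g {2, 3, 4}) ∈ V := by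
      rw [← hj]; exact Gg.1
    have hstep2 : VStep (KGH E E lt) V (qmap E E lt f {3, 5}) (qmap E E lt g {2, 3, 4}) :=
      Or.inr hGg'
    exact (Relation.TransGen.tail' (hpath.tail hstep1) hstep2)
  · have hpath := Gf.2 {1, 3, 6} (by decide)
    have hstep1 : VStep (KGH E E lt) V (qmap E E lt f {1, 3, 6}) (qmap E E lt f {3, 6}) := by
      left
      refine ⟨qmap_mem_KGH hfE (dunceT_mem_mdh (by decide)),
        qmap_mem_KGH hfE (mem_mdh_of_subset (by decide : ({1,3,6} : Finset (Fin 7)) ∈ dunceT)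
          (by decide) (by decide)), ⟨qmap_mono (by decide), ?_⟩, ?_⟩
      · rw [qmap_card (E := E) (lt := lt) hnef, qmap_card (E := E) (lt := lt) hnef]
        decide
      · intro hmem
        have hGg' : (qmap E E lt f {3, 6}, qmap E E lt g {2, 3, 4}) ∈ V := by
          rw [← hj]; exact Gg.1
        have huniq := hV.2.1 _ hmem _ hGg' (Or.inl rfl)
        have heqq : qmap E E lt f {1, 3, 6} = qmap E E lt g {2, 3, 4} :=
          congrArg Prod.snd huniq
        exact hfgne (copy_eq hor hfE hgE (by decide) (by decide) heqq)
    have hGg' : (qmap E E lt f {3, 6}, qmap E E lt g {2, 3, 4}) ∈ V := by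
      rw [← hj]; exact Gg.1
    have hstep2 : VStep (KGH E E lt) V (qmap E E lt f {3, 6}) (qmap E E lt g {2, 3, 4}) :=
      Or.inr hGg'
    exact (Relation.TransGen.tail' (hpath.tail hstep1) hstep2)

end Aux4
/-- the subgraph `A(G,V) = (V, E ∖ F)` is acyclic and has at least
`|E| - m₂` edges. -/
theorem stmt16 {α : Type*} [DecidableEq α] (E : Finset (α × α))
    (lt : α × α → α × α → Prop) [IsStrictTotalOrder (α × α) lt]
    (hor : Oriented E) (hconn : GraphConnected E) (hdeg : Degree3 E)
    (V : Set (Finset (Quot (glueRel E E lt)) × Finset (Quot (glueRel E E lt))))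
    (hV : IsDGVF (KGH E E lt) V) (m₂ : ℕ)
    (hm₂ : m₂ = {σ : Finset (Quot (glueRel E E lt)) |
      IsCritical (KGH E E lt) V σ ∧ σ.card = 3}.ncard) :
    AcyclicEdges ((↑E : Set (α × α)) \ criticalEdgeSet E lt V) ∧
    (E.card : ℤ) - (m₂ : ℤ) ≤
      (((↑E : Set (α × α)) \ criticalEdgeSet E lt V).ncard : ℤ) := by
  classical
  have hF'sub : criticalEdgeSet E lt V ⊆ (↑E : Set (α × α)) := fun f hf => hf.1
  constructor
  · -- acyclicity
    intro x hx
    set S : Set (α × α) := (↑E : Set (α × α)) \ criticalEdgeSet E lt V with hS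
    have chain : ∀ a b : α, Relation.TransGen (fun a b : α => (a, b) ∈ S) a b →
        ∃ p q : α × α, p ∈ S ∧ q ∈ S ∧ p.1 = a ∧ q.2 = b ∧
          Relation.ReflTransGen (fun p q : α × α => p ∈ S ∧ q ∈ S ∧ p.2 = q.1) p q := by
      intro a b h
      induction h with
      | @single b h' => exact ⟨(a, b), (a, b), h', h', rfl, rfl, Relation.ReflTransGen.refl⟩
      | @tail b c h1 h2 ih =>
        obtain ⟨p, q, hp, hq, hpa, hqb, hpath⟩ := ih
        exact ⟨p, (b, c), hp, h2, hpa, rfl, hpath.tail ⟨hq, h2, by rw [hqb]⟩⟩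
    obtain ⟨p, q, hp, hq, hpa, hqb, hpath⟩ := chain x x hx
    have hcyc : Relation.TransGen (fun p q : α × α => p ∈ S ∧ q ∈ S ∧ p.2 = q.1) p p :=
      Relation.TransGen.tail' hpath ⟨hq, hp, by rw [hqb, hpa]⟩
    exact hV.2.2 _ (transGen_lift
      (fun p q h => hop hor hdeg hV h.1 h.2.1 h.2.2) hcyc)
  · -- counting
    have hKfin : (KGH E E lt).Finite := by
      have hsub : KGH E E lt ⊆ (fun p : (α × α) × Finset (Fin 7) => qmap E E lt p.1 p.2) ''
          ((↑E : Set (α × α)) ×ˢ (Set.univ : Set (Finset (Fin 7)))) := by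
        rintro ρ ⟨e, he, σ, hσ, rfl⟩
        exact ⟨(e, σ), ⟨he, trivial⟩, rfl⟩
      exact (((E.finite_toSet).prod Set.finite_univ).image _).subset hsub
    have hcrit2fin : {σ : Finset (Quot (glueRel E E lt)) |
        IsCritical (KGH E E lt) V σ ∧ σ.card = 3}.Finite :=
      hKfin.subset (fun σ hσ => hσ.1.1)
    have hchoice : ∀ f ∈ criticalEdgeSet E lt V, ∃ σ, σ ∈ gadgetIn E E lt f ∧
        σ.card = 3 ∧ IsCritical (KGH E E lt) V σ := by
      intro f hf
      obtain ⟨-, σ, h1, h2, h3⟩ := hf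
      exact ⟨σ, h1, h2, h3⟩
    choose! c hc1 hc2 hc3 using hchoice
    have hgadT : ∀ f ∈ criticalEdgeSet E lt V, ∃ τ ∈ dunceT, c f = qmap E E lt f τ := by
      intro f hf
      obtain ⟨σ, ⟨hσne, τ, hτ, hστ⟩, heq⟩ := hc1 f hf
      have hfE : f ∈ E := hf.1
      have hnef : f.1 ≠ f.2 := (hor f hfE).1
      have hτd : τ ∈ dunceT := mem_dunceT_iff.mp hτ
      have hc : σ.card = 3 := by
        have h3 := hc2 f hf
        rw [heq, qmap_card hnef] at h3
        exact h3
      have hστe : σ = τ := Finset.eq_of_subset_of_card_le hστ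
        (le_of_eq (by rw [dunceT_card hτd, hc]))
      exact ⟨τ, hτd, by rw [heq, hστe]⟩
    have hinj : Set.InjOn c (criticalEdgeSet E lt V) := by
      intro f hf f' hf' heq
      obtain ⟨τ, hτ, he1⟩ := hgadT f hf
      obtain ⟨τ', hτ', he2⟩ := hgadT f' hf'
      exact copy_eq hor hf.1 hf'.1 hτ hτ' (by rw [← he1, ← he2, heq])
    have himg : c '' (criticalEdgeSet E lt V) ⊆
        {σ : Finset (Quot (glueRel E E lt)) |
          IsCritical (KGH E E lt) V σ ∧ σ.card = 3} := by
      rintro σ ⟨f, hf, rfl⟩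
      exact ⟨hc3 f hf, hc2 f hf⟩
    have hle : (criticalEdgeSet E lt V).ncard ≤ m₂ := by
      rw [hm₂]
      calc (criticalEdgeSet E lt V).ncard = (c '' (criticalEdgeSet E lt V)).ncard :=
            (Set.ncard_image_of_injOn hinj).symm
        _ ≤ _ := Set.ncard_le_ncard himg hcrit2fin
    have hdiff : ((↑E : Set (α × α)) \ criticalEdgeSet E lt V).ncard +
        (criticalEdgeSet E lt V).ncard = (↑E : Set (α × α)).ncard :=
      Set.ncard_diff_add_ncard_of_subset hF'sub (E.finite_toSet)
    rw [Set.ncard_coe_finset] at hdiff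
    omega

end MorseApprox
end

section
/- Let G be an oriented connected degree-3 graph and K(G) the corresponding complex. Then optMaxMM(K(G)) ≤ 78 · opt3OMAS(G), where optMaxMM(K(G)) is the maximum, over all discrete gradient vector fields V on K(G), of the number of regular (matched) simplices of V, and opt3OMAS(G) is the maximum number of edges of an acyclic subgraph of G. -/
namespace MorseApprox

variable {α : Type*}

/-- The modified dunce hat as a concrete finset. -/
def mdhFinset : Finset (Finset (Fin 7)) :=
  Finset.univ.filter (fun σ => σ.Nonempty ∧
    ∃ τ ∈ ({{1, 3, 5}, {1, 3, 6}, {3, 4, 5}, {0, 4, 5}, {0, 2, 5}, {1, 2, 5}, {0, 1, 2},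
      {0, 1, 4}, {1, 4, 6}, {0, 4, 6}, {0, 2, 6}, {2, 3, 6}, {2, 3, 4}} :
        Finset (Finset (Fin 7))), σ ⊆ τ)

lemma mdhFinset_card : mdhFinset.card = 39 := by decide

lemma mdh_subset_mdhFinset : modifiedDunceHat ⊆ ↑mdhFinset := by
  rintro σ ⟨hne, τ, hτ, hsub⟩
  simp only [mdhFinset, Finset.coe_filter, Finset.mem_univ, Set.mem_setOf_eq, true_and]
  refine ⟨hne, τ, ?_, hsub⟩
  simp only [dunceTriangles, Set.mem_insert_iff, Set.mem_singleton_iff] at hτ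
  simp only [Finset.mem_insert, Finset.mem_singleton]
  tauto

lemma transGen_lt {f : α → ℕ} {r : α → α → Prop}
    (hr : ∀ a b, r a b → f a < f b) {x y : α}
    (h : Relation.TransGen r x y) : f x < f y := by
  induction h with
  | single h => exact hr _ _ h
  | tail _ h ih => exact ih.trans (hr _ _ h)

lemma transGen_gt {f : α → ℕ} {r : α → α → Prop}
    (hr : ∀ a b, r a b → f b < f a) {x y : α}
    (h : Relation.TransGen r x y) : f y < f x := by
  induction h with
  | single h => exact hr _ _ h
  | tail _ h ih => exact (hr _ _ h).trans ih

lemma card_le_two_mul_maxAcyclic [DecidableEq α] (E : Finset (α × α))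
    (hor : Oriented E) : E.card ≤ 2 * maxAcyclic E := by
  classical
  set V0 : Finset α := E.image Prod.fst ∪ E.image Prod.snd with hV0
  set f : α → ℕ := fun v => if h : v ∈ V0 then ((V0.equivFin ⟨v, h⟩ : Fin V0.card) : ℕ) else 0
    with hf
  have hinj : ∀ e ∈ E, f e.1 ≠ f e.2 := by
    intro e he heq
    have h1 : e.1 ∈ V0 := by
      simp only [hV0, Finset.mem_union, Finset.mem_image]; exact Or.inl ⟨e, he, rfl⟩
    have h2 : e.2 ∈ V0 := by
      simp only [hV0, Finset.mem_union, Finset.mem_image]; exact Or.inr ⟨e, he, rfl⟩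
    have : e.1 = e.2 := by
      have := heq
      simp only [hf, dif_pos h1, dif_pos h2] at this
      have h3 : (V0.equivFin ⟨e.1, h1⟩) = (V0.equivFin ⟨e.2, h2⟩) := Fin.ext this
      have := V0.equivFin.injective h3
      exact congrArg Subtype.val this
    exact (hor e he).1 this
  set A : Finset (α × α) := E.filter (fun e => f e.1 < f e.2) with hA
  set B : Finset (α × α) := E.filter (fun e => f e.2 < f e.1) with hB
  have hbdd : BddAbove {n | ∃ A : Finset (α × α), A ⊆ E ∧
      AcyclicEdges (↑A : Set (α × α)) ∧ n = A.card} := by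
    refine ⟨E.card, ?_⟩
    rintro n ⟨A', hA', _, rfl⟩
    exact Finset.card_le_card hA'
  have hAmem : A.card ≤ maxAcyclic E := by
    refine le_csSup hbdd ⟨A, Finset.filter_subset _ _, ?_, rfl⟩
    intro x hx
    exact lt_irrefl (f x) (transGen_lt (fun a b hab => by
      have : (a, b) ∈ A := hab
      exact (Finset.mem_filter.mp this).2) hx)
  have hBmem : B.card ≤ maxAcyclic E := by
    refine le_csSup hbdd ⟨B, Finset.filter_subset _ _, ?_, rfl⟩
    intro x hx
    exact lt_irrefl (f x) (transGen_gt (f := f) (r := fun a b => (a, b) ∈ (↑B : Set (α × α)))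
      (fun a b hab => by
        have : (a, b) ∈ B := hab
        exact (Finset.mem_filter.mp this).2) hx)
  have hcover : E ⊆ A ∪ B := by
    intro e he
    rcases lt_or_gt_of_ne (hinj e he) with h | h
    · exact Finset.mem_union_left _ (Finset.mem_filter.mpr ⟨he, h⟩)
    · exact Finset.mem_union_right _ (Finset.mem_filter.mpr ⟨he, h⟩)
  calc E.card ≤ (A ∪ B).card := Finset.card_le_card hcover
    _ ≤ A.card + B.card := Finset.card_union_le _ _
    _ ≤ maxAcyclic E + maxAcyclic E := Nat.add_le_add hAmem hBmem
    _ = 2 * maxAcyclic E := (two_mul _).symm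

lemma optMaxMM_le [DecidableEq α] (E : Finset (α × α))
    (lt : α × α → α × α → Prop) : optMaxMM (KGH E E lt) ≤ 39 * E.card := by
  classical
  apply csSup_le'
  rintro n ⟨V, hV, rfl⟩
  set T : Finset (Finset (Quot (glueRel E E lt))) :=
    (E ×ˢ mdhFinset).image (fun p => qmap E E lt p.1 p.2) with hT
  have hKsub : KGH E E lt ⊆ ↑T := by
    rintro ρ ⟨e, he, σ, hσ, rfl⟩
    refine Finset.mem_coe.mpr (Finset.mem_image.mpr ⟨(e, σ), ?_, rfl⟩)
    exact Finset.mem_product.mpr ⟨he, mdh_subset_mdhFinset hσ⟩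
  have hRsub : {σ : Finset (Quot (glueRel E E lt)) | ∃ p ∈ V, σ = p.1 ∨ σ = p.2} ⊆ ↑T := by
    rintro σ ⟨p, hp, hσ⟩
    rcases hσ with rfl | rfl
    · exact hKsub (hV.1 p hp).1
    · exact hKsub (hV.1 p hp).2.1
  have h1 : regularCount V ≤ T.card := by
    rw [regularCount, ← Set.ncard_coe_finset T]
    exact Set.ncard_le_ncard hRsub (Finset.finite_toSet T)
  have h2 : T.card ≤ 39 * E.card := by
    calc T.card ≤ (E ×ˢ mdhFinset).card := Finset.card_image_le
      _ = E.card * 39 := by rw [Finset.card_product, mdhFinset_card]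
      _ = 39 * E.card := Nat.mul_comm _ _
  exact h1.trans h2

/-- `optMaxMM(K(G)) ≤ 78 · opt3OMAS(G)`. -/
theorem stmt17 {α : Type*} [DecidableEq α] (E : Finset (α × α))
    (lt : α × α → α × α → Prop) [IsStrictTotalOrder (α × α) lt]
    (hor : Oriented E) (hconn : GraphConnected E) (hdeg : Degree3 E) :
    optMaxMM (KGH E E lt) ≤ 78 * maxAcyclic E := by
  calc optMaxMM (KGH E E lt) ≤ 39 * E.card := optMaxMM_le E lt
    _ ≤ 39 * (2 * maxAcyclic E) :=
        Nat.mul_le_mul_left _ (card_le_two_mul_maxAcyclic E hor)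
    _ = 78 * maxAcyclic E := by ring

end MorseApprox
end
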